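/- Let G be a DAG that is the disjoint union of two subgraphs G₁ and G₂. Then the vanishing ideal of the Gaussian Bayesian network satisfies I_G = I_{G₁} + I_{G₂} + ⟨σ_{ij} : i ∈ V(G₁), j ∈ V(G₂)⟩. -/

import Mathlib

open MvPolynomial

/-- A directed acyclic graph on vertices `{0, …, n-1}`, numerically ordered:
`i → j` only if `i < j`. -/
structure DAG (n : ℕ) where
  edge : Fin n → Fin n → Bool
  increasing : ∀ i j, edge i j = true → i < j

namespace DAG

variable {n : ℕ}

/-- Indeterminates: `a_i` for each vertex (Sum.inl) and `λ_{kl}` for each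
potential edge (Sum.inr). -/
abbrev Vars (n : ℕ) := Fin n ⊕ (Fin n × Fin n)

/-- `L` is the directed path from the top down to `i`, `R` from the top down to `j`;
they share exactly the top vertex, and the resulting colliderless path is simple. -/
def IsTrek (G : DAG n) (i j : Fin n) (L R : List (Fin n)) : Prop :=
  L ≠ [] ∧ R ≠ [] ∧ L.head? = R.head? ∧ L.getLast? = some i ∧ R.getLast? = some j ∧
    L.Chain' (fun a b => G.edge a b = true) ∧ R.Chain' (fun a b => G.edge a b = true) ∧
    (L ++ R.tail).Nodup

/-- The type of treks from `i` to `j` in `G`. -/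
def Trek (G : DAG n) (i j : Fin n) : Type :=
  {p : {l : List (Fin n) // l.Nodup} × {l : List (Fin n) // l.Nodup} //
    IsTrek G i j p.1.1 p.2.1}

noncomputable instance (G : DAG n) (i j : Fin n) : Fintype (Trek G i j) := by
  classical exact Subtype.fintype _

def Trek.left {G : DAG n} {i j : Fin n} (P : Trek G i j) : List (Fin n) := P.1.1.1
def Trek.right {G : DAG n} {i j : Fin n} (P : Trek G i j) : List (Fin n) := P.1.2.1

/-- The topmost vertex of a trek. -/
def Trek.top {G : DAG n} {i j : Fin n} (P : Trek G i j) : Fin n := P.left.head?.getD i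

/-- The consecutive pairs (directed edges) of a vertex list. -/
def pathEdges (l : List (Fin n)) : List (Fin n × Fin n) := l.zip l.tail

/-- The (directed) edges used by a trek. -/
def Trek.edges {G : DAG n} {i j : Fin n} (P : Trek G i j) : List (Fin n × Fin n) :=
  pathEdges P.left ++ pathEdges P.right

/-- The monomial `a_{top(P)} · ∏_{k→l ∈ P} λ_{kl}` of a trek. -/
noncomputable def Trek.poly {G : DAG n} {i j : Fin n} (P : Trek G i j) :
    MvPolynomial (Vars n) ℂ :=
  X (Sum.inl P.top) * (P.edges.map (fun e => X (Sum.inr e))).prod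

/-- The trek-rule polynomial `σ_{ij}(a,λ) = ∑_{P ∈ T(i,j)} a_{top(P)} ∏_{k→l∈P} λ_{kl}`. -/
noncomputable def trekPoly (G : DAG n) (i j : Fin n) : MvPolynomial (Vars n) ℂ :=
  ∑ P : Trek G i j, P.poly

/-- The parent set `pa(j)` of a vertex. -/
def parents (G : DAG n) (j : Fin n) : Finset (Fin n) :=
  Finset.univ.filter (fun k => G.edge k j = true)

/-- Index set for the entries `σ_{ij}`, `1 ≤ i ≤ j ≤ n`, of a symmetric matrix. -/
abbrev SymIdx (n : ℕ) := {p : Fin n × Fin n // p.1 ≤ p.2}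

/-- The variable index `σ_{ij}` (sorted). -/
def sIdx (i j : Fin n) : SymIdx n :=
  if h : i ≤ j then ⟨(i, j), h⟩ else ⟨(j, i), (le_total i j).resolve_left h⟩

/-- The trek-rule ring homomorphism `φ_G : ℂ[σ] → ℂ[a,λ]`. -/
noncomputable def phi (G : DAG n) :
    MvPolynomial (SymIdx n) ℂ →ₐ[ℂ] MvPolynomial (Vars n) ℂ :=
  aeval (fun p => trekPoly G p.1.1 p.1.2)

/-- The vanishing ideal `I_G = ker φ_G` of the Gaussian Bayesian network of `G`. -/
noncomputable def gaussianIdeal (G : DAG n) : Ideal (MvPolynomial (SymIdx n) ℂ) :=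
  RingHom.ker (phi G)

/-- The underlying undirected graph of `G`. -/
def underlying (G : DAG n) : SimpleGraph (Fin n) where
  Adj i j := G.edge i j = true ∨ G.edge j i = true
  symm := ⟨fun i j h => h.symm⟩
  loopless := by
    constructor
    intro i h
    rcases h with h | h <;> exact absurd (G.increasing i i h) (lt_irrefl i)

/-- A polytree: a DAG whose underlying undirected graph is a tree. -/
def IsPolytree (G : DAG n) : Prop := G.underlying.IsTree

/-- `c` is a choke point between `I` and `J`: every trek from `I` to `J` contains `c`,
and `c` is on the `I`-side of every such trek, or on the `J`-side of every such trek. -/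
def IsChokePoint (G : DAG n) (I J : Set (Fin n)) (c : Fin n) : Prop :=
  (∀ i ∈ I, ∀ j ∈ J, ∀ P : Trek G i j, c ∈ P.left) ∨
  (∀ i ∈ I, ∀ j ∈ J, ∀ P : Trek G i j, c ∈ P.right)

/-- The induced subgraph on a vertex subset `S` (kept on the same vertex set). -/
def induce (G : DAG n) (S : Finset (Fin n)) : DAG n where
  edge i j := decide (G.edge i j = true ∧ i ∈ S ∧ j ∈ S)
  increasing := by
    intro i j h
    exact G.increasing i j (of_decide_eq_true h).1

/-- Indices `σ_{ij}` with both `i, j ∈ S`. -/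
abbrev SubIdx (n : ℕ) (S : Finset (Fin n)) := {p : SymIdx n // p.1.1 ∈ S ∧ p.1.2 ∈ S}

/-- The trek-rule homomorphism restricted to the variables `σ_{ij}`, `i,j ∈ S`. -/
noncomputable def phiSub (G : DAG n) (S : Finset (Fin n)) :
    MvPolynomial (SubIdx n S) ℂ →ₐ[ℂ] MvPolynomial (Vars n) ℂ :=
  aeval (fun p => trekPoly G p.1.1.1 p.1.1.2)

/-- The ideal `I_{G,S} = I_G ∩ ℂ[σ_{ij} : i,j ∈ S]` of the model with observed
variables `S` (the remaining variables hidden). -/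
noncomputable def hiddenIdeal (G : DAG n) (S : Finset (Fin n)) :
    Ideal (MvPolynomial (SubIdx n S) ℂ) :=
  RingHom.ker (phiSub G S)

end DAG


/-! The trek rule sends a cross variable `σ_ij` (`i ∈ V₁`, `j ∈ V₂`) to `0`: both `V₁` and `V₂`
are ancestral, so the top of a trek from `i` to `j` would lie in both. It sends the variables
internal to `V₁` (resp. `V₂`) to polynomials in the parameters attached to `V₁` (resp. `V₂`),
which coincide with the trek polynomials of the induced subgraph. Polynomial rings in disjoint
sets of variables are linearly disjoint, so on the internal variables `φ_G` factors as
`φ_{G₁} ⊗ φ_{G₂}` onto the tensor product of the two images, followed by the multiplication map,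
which is injective. Over a field the kernel of a tensor product of two surjections is generated
by the two kernels. -/

open scoped TensorProduct

namespace Algebra.TensorProduct

variable {K A B C : Type*} [Field K] [CommRing A] [CommRing B] [CommRing C]
  [Algebra K A] [Algebra K B] [Algebra K C]

theorem ker_productMap_of_linearDisjoint (f : A →ₐ[K] C) (g : B →ₐ[K] C)
    (h : f.range.LinearDisjoint g.range) :
    RingHom.ker (productMap f g) =
      (RingHom.ker f).map (includeLeft : A →ₐ[K] A ⊗[K] B) ⊔
        (RingHom.ker g).map (includeRight : B →ₐ[K] A ⊗[K] B) := by
  have hfac : productMap f g =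
      (f.range.mulMap g.range).comp (map f.rangeRestrict g.rangeRestrict) := by
    ext <;> simp
  rw [hfac, AlgHom.ker_coe, AlgHom.comp_toRingHom,
    RingHom.ker_comp_of_injective _ h.injective, ← AlgHom.ker_coe,
    map_ker _ _ f.rangeRestrict_surjective g.rangeRestrict_surjective,
    AlgHom.ker_rangeRestrict, AlgHom.ker_rangeRestrict]

end Algebra.TensorProduct

namespace MvPolynomial

open Algebra.TensorProduct

section
variable {R S σ σ' : Type*} [CommRing R] [CommRing S] [Algebra R S]

theorem ker_constantCoeff : RingHom.ker (constantCoeff (σ := σ) (R := R)) = idealOfVars σ R := by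
  ext p
  rw [RingHom.mem_ker, ← pow_one (idealOfVars σ R), mem_pow_idealOfVars_iff']
  simp [Finsupp.degree_eq_zero_iff, constantCoeff_eq]

theorem ker_aeval_zero [FaithfulSMul R S] :
    RingHom.ker (aeval (R := R) (0 : σ → S)) = idealOfVars σ R := by
  ext p
  rw [RingHom.mem_ker, aeval_zero, map_eq_zero_iff _ (FaithfulSMul.algebraMap_injective R S),
    ← RingHom.mem_ker, ker_constantCoeff]

theorem ker_aeval_eq_map_rename {e : σ → σ'} (he : Function.Surjective e) (F : σ' → S) :
    RingHom.ker (aeval (R := R) F) = (RingHom.ker (aeval (R := R) (F ∘ e))).map (rename e) := by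
  have hcomap : (RingHom.ker (aeval (R := R) F)).comap (rename e) =
      RingHom.ker (aeval (R := R) (F ∘ e)) := by
    rw [← aeval_comp_rename]; rfl
  rw [← hcomap, Ideal.map_comap_of_surjective _ (rename_surjective e he)]

theorem map_rename_val_idealOfVars (P : σ → Prop) :
    (idealOfVars {x // P x} R).map (rename (R := R) Subtype.val) =
      Ideal.span {f | ∃ p, P p ∧ f = X p} := by
  rw [Ideal.map_span, ← Set.range_comp]
  congr 1
  ext f
  simp [eq_comm]

end

variable {K V τ₁ τ₂ : Type*} [Field K]

theorem ker_aeval_sumElim_of_linearDisjoint (φ₁ : τ₁ → MvPolynomial V K)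
    (φ₂ : τ₂ → MvPolynomial V K) (h : (aeval (R := K) φ₁).range.LinearDisjoint (aeval φ₂).range) :
    RingHom.ker (aeval (R := K) (Sum.elim φ₁ φ₂)) =
      (RingHom.ker (aeval (R := K) φ₁)).map (rename (R := K) (Sum.inl (β := τ₂))) ⊔
        (RingHom.ker (aeval (R := K) φ₂)).map (rename (R := K) (Sum.inr (α := τ₁))) := by
  let e : MvPolynomial τ₁ K ⊗[K] MvPolynomial τ₂ K →ₐ[K] MvPolynomial (τ₁ ⊕ τ₂) K :=
    tensorEquivSum K τ₁ τ₂ K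
  have hfac : (aeval (R := K) (Sum.elim φ₁ φ₂)).comp e = productMap (aeval φ₁) (aeval φ₂) := by
    ext <;> simp [e]
  have hl : e.comp includeLeft = rename Sum.inl := by ext; simp [e]
  have hr : e.comp includeRight = rename Sum.inr := by ext; simp [e]
  have hker : (RingHom.ker (aeval (R := K) (Sum.elim φ₁ φ₂))).comap e =
      RingHom.ker (productMap (aeval (R := K) φ₁) (aeval φ₂)) := by
    rw [← hfac]; rfl
  rw [← Ideal.map_comap_of_surjective e (tensorEquivSum K τ₁ τ₂ K).surjective (RingHom.ker _),
    hker, ker_productMap_of_linearDisjoint _ _ h, Ideal.map_sup, Ideal.map_mapₐ, Ideal.map_mapₐ,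
    hl, hr]

theorem linearDisjoint_supported {W₁ W₂ : Set V} (hW : Disjoint W₁ W₂) :
    (supported K W₁).LinearDisjoint (supported K W₂) := by
  let ι := (rename (Sum.elim ((↑) : W₁ → V) ((↑) : W₂ → V))).comp
    (tensorEquivSum K W₁ W₂ K).toAlgHom
  have hι : Function.Injective ι :=
    (rename_injective _ (Subtype.val_injective.sumElim Subtype.val_injective
      fun a b hab => hW.ne_of_mem a.2 b.2 hab)).comp (tensorEquivSum K W₁ W₂ K).injective
  have hl : ι.comp includeLeft = rename (↑) := by ext; simp [ι]
  have hr : ι.comp includeRight = rename (↑) := by ext; simp [ι]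
  have := (Subalgebra.LinearDisjoint.include_range K (MvPolynomial W₁ K)
    (MvPolynomial W₂ K)).map ι hι
  rwa [← AlgHom.range_comp, ← AlgHom.range_comp, hl, hr, ← supported_eq_range_rename,
    ← supported_eq_range_rename] at this

theorem range_aeval_le_supported {W : Set V} {φ : τ₁ → MvPolynomial V K}
    (h : ∀ t, φ t ∈ supported K W) : (aeval (R := K) φ).range ≤ supported K W := by
  rw [aeval_range]
  exact Algebra.adjoin_le (Set.range_subset_iff.2 h)

theorem ker_aeval_sumElim_of_supported {W₁ W₂ : Set V} (hW : Disjoint W₁ W₂)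
    {φ₁ : τ₁ → MvPolynomial V K} {φ₂ : τ₂ → MvPolynomial V K}
    (h₁ : ∀ t, φ₁ t ∈ supported K W₁) (h₂ : ∀ t, φ₂ t ∈ supported K W₂) :
    RingHom.ker (aeval (R := K) (Sum.elim φ₁ φ₂)) =
      (RingHom.ker (aeval (R := K) φ₁)).map (rename (R := K) (Sum.inl (β := τ₂))) ⊔
        (RingHom.ker (aeval (R := K) φ₂)).map (rename (R := K) (Sum.inr (α := τ₁))) :=
  ker_aeval_sumElim_of_linearDisjoint φ₁ φ₂ <| (linearDisjoint_supported hW).of_le_of_flat_right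
    (range_aeval_le_supported h₁) (range_aeval_le_supported h₂)

theorem ker_aeval_sumElim_zero (φ : τ₁ → MvPolynomial V K) :
    RingHom.ker (aeval (R := K) (Sum.elim φ (0 : τ₂ → MvPolynomial V K))) =
      (RingHom.ker (aeval (R := K) φ)).map (rename (R := K) (Sum.inl (β := τ₂))) ⊔
        (idealOfVars τ₂ K).map (rename (R := K) (Sum.inr (α := τ₁))) := by
  have hbot : (aeval (R := K) (0 : τ₂ → MvPolynomial V K)).range = ⊥ := by
    rw [aeval_range, eq_bot_iff]
    exact Algebra.adjoin_le (Set.range_subset_iff.2 fun _ => zero_mem _)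
  rw [ker_aeval_sumElim_of_linearDisjoint φ 0 (hbot ▸ Subalgebra.LinearDisjoint.bot_right _),
    ker_aeval_zero]

end MvPolynomial

theorem List.getD_head?_mem {α : Type*} {l : List α} (hl : l ≠ []) (d : α) :
    l.head?.getD d ∈ l := by
  cases l with
  | nil => exact absurd rfl hl
  | cons => exact List.mem_cons_self

namespace DAG

variable {n : ℕ} {G : DAG n} {S T : Finset (Fin n)} {i j : Fin n}

def IsAncestral (G : DAG n) (S : Finset (Fin n)) : Prop :=
  ∀ a b, G.edge a b = true → b ∈ S → a ∈ S

theorem induce_isAncestral (G : DAG n) (S : Finset (Fin n)) : (G.induce S).IsAncestral S :=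
  fun _ _ h _ => (of_decide_eq_true h).2.1

theorem isAncestral_of_forall_edge (hST : Disjoint S T)
    (hedge : ∀ i j, G.edge i j = true → (i ∈ S ∧ j ∈ S) ∨ (i ∈ T ∧ j ∈ T)) : G.IsAncestral S :=
  fun a b hab hb => (hedge a b hab).elim And.left
    fun h => absurd h.2 (Finset.disjoint_left.1 hST hb)

theorem IsAncestral.forall_mem_of_isChain (hS : G.IsAncestral S) {l : List (Fin n)}
    (hl : l.IsChain (fun a b => G.edge a b = true))
    (hlast : l.getLast? = some i) (hi : i ∈ S) : ∀ x ∈ l, x ∈ S :=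
  hl.backwards_induction (· ∈ S) _ (fun a b hab hb => hS a b hab hb) fun _ =>
    List.getLast_of_getLast?_eq_some hlast ▸ hi

theorem isChain_induce_iff {l : List (Fin n)} (hl : ∀ x ∈ l, x ∈ S) :
    l.IsChain (fun a b => (G.induce S).edge a b = true) ↔
      l.IsChain (fun a b => G.edge a b = true) :=
  List.IsChain.iff_of_mem_imp fun a b ha hb => by simp [induce, hl a ha, hl b hb]

theorem isTrek_induce_iff (hS : G.IsAncestral S) (hi : i ∈ S) (hj : j ∈ S)
    (L R : List (Fin n)) :
    IsTrek (G.induce S) i j L R ↔ IsTrek G i j L R := by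
  constructor
  · rintro ⟨hL, hR, hhead, hlastL, hlastR, hcL, hcR, hnd⟩
    have hLS := (G.induce_isAncestral S).forall_mem_of_isChain hcL hlastL hi
    have hRS := (G.induce_isAncestral S).forall_mem_of_isChain hcR hlastR hj
    exact ⟨hL, hR, hhead, hlastL, hlastR, (isChain_induce_iff hLS).1 hcL,
      (isChain_induce_iff hRS).1 hcR, hnd⟩
  · rintro ⟨hL, hR, hhead, hlastL, hlastR, hcL, hcR, hnd⟩
    have hLS := hS.forall_mem_of_isChain hcL hlastL hi
    have hRS := hS.forall_mem_of_isChain hcR hlastR hj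
    exact ⟨hL, hR, hhead, hlastL, hlastR, (isChain_induce_iff hLS).2 hcL,
      (isChain_induce_iff hRS).2 hcR, hnd⟩

def trekInduceEquiv (hS : G.IsAncestral S) (hi : i ∈ S) (hj : j ∈ S) :
    Trek (G.induce S) i j ≃ Trek G i j :=
  Equiv.subtypeEquivRight fun _ => isTrek_induce_iff hS hi hj _ _

theorem trekPoly_induce (hS : G.IsAncestral S) (hi : i ∈ S) (hj : j ∈ S) :
    trekPoly (G.induce S) i j = trekPoly G i j :=
  Fintype.sum_equiv (trekInduceEquiv hS hi hj) _ _ fun _ => rfl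

namespace Trek

variable (P : Trek G i j)

theorem top_mem_left : P.top ∈ P.left :=
  List.getD_head?_mem P.2.1 i

theorem top_mem_right : P.top ∈ P.right := by
  obtain ⟨-, hR, hhead, -⟩ := P.2
  rw [top, left, hhead]
  exact List.getD_head?_mem hR i

theorem forall_mem_left (hS : G.IsAncestral S) (hi : i ∈ S) : ∀ x ∈ P.left, x ∈ S := by
  obtain ⟨-, -, -, hlast, -, hchain, -⟩ := P.2
  exact hS.forall_mem_of_isChain hchain hlast hi

theorem forall_mem_right (hS : G.IsAncestral S) (hj : j ∈ S) : ∀ x ∈ P.right, x ∈ S := by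
  obtain ⟨-, -, -, -, hlast, -, hchain, -⟩ := P.2
  exact hS.forall_mem_of_isChain hchain hlast hj

end Trek

theorem trekPoly_eq_zero_of_disjoint (hS : G.IsAncestral S) (hT : G.IsAncestral T)
    (hST : Disjoint S T) (hi : i ∈ S) (hj : j ∈ T) : trekPoly G i j = 0 := by
  have : IsEmpty (Trek G i j) := ⟨fun P => Finset.disjoint_left.1 hST
    (P.forall_mem_left hS hi _ P.top_mem_left) (P.forall_mem_right hT hj _ P.top_mem_right)⟩
  exact Fintype.sum_empty _

def varsOn (S : Finset (Fin n)) : Set (Vars n) :=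
  {v | Sum.elim (· ∈ S) (fun e : Fin n × Fin n => e.1 ∈ S) v}

theorem disjoint_varsOn (hST : Disjoint S T) :
    Disjoint (varsOn S) (varsOn T) := by
  rw [Set.disjoint_left]
  rintro (a | e) hS hT
  exacts [Finset.disjoint_left.1 hST hS hT, Finset.disjoint_left.1 hST hS hT]

theorem Trek.poly_mem_supported (hS : G.IsAncestral S) (hi : i ∈ S) (hj : j ∈ S)
    (P : Trek G i j) : P.poly ∈ supported ℂ (varsOn S) := by
  refine mul_mem (X_mem_supported.2 (P.forall_mem_left hS hi _ P.top_mem_left))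
    (Subalgebra.list_prod_mem _ fun x hx => ?_)
  obtain ⟨e, he, rfl⟩ := List.mem_map.1 hx
  refine X_mem_supported.2 ?_
  rcases List.mem_append.1 he with h | h
  · exact P.forall_mem_left hS hi _ (List.of_mem_zip h).1
  · exact P.forall_mem_right hS hj _ (List.of_mem_zip h).1

theorem trekPoly_mem_supported (hS : G.IsAncestral S) (hi : i ∈ S) (hj : j ∈ S) :
    trekPoly G i j ∈ supported ℂ (varsOn S) :=
  sum_mem fun P _ => P.poly_mem_supported hS hi hj

abbrev CrossIdx (n : ℕ) (V₁ V₂ : Finset (Fin n)) :=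
  {p : SymIdx n // (p.1.1 ∈ V₁ ∧ p.1.2 ∈ V₂) ∨ (p.1.1 ∈ V₂ ∧ p.1.2 ∈ V₁)}

theorem surjective_sumElim_val {V₁ V₂ : Finset (Fin n)} (hcover : V₁ ∪ V₂ = Finset.univ) :
    Function.Surjective (Sum.elim (Sum.elim Subtype.val Subtype.val) Subtype.val :
      (SubIdx n V₁ ⊕ SubIdx n V₂) ⊕ CrossIdx n V₁ V₂ → SymIdx n) := by
  intro p
  have hmem : ∀ x, x ∈ V₁ ∨ x ∈ V₂ := fun x => Finset.mem_union.1 (hcover ▸ Finset.mem_univ x)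
  rcases hmem p.1.1 with h₁ | h₁ <;> rcases hmem p.1.2 with h₂ | h₂
  exacts [⟨.inl (.inl ⟨p, h₁, h₂⟩), rfl⟩, ⟨.inr ⟨p, .inl ⟨h₁, h₂⟩⟩, rfl⟩,
    ⟨.inr ⟨p, .inr ⟨h₁, h₂⟩⟩, rfl⟩, ⟨.inl (.inr ⟨p, h₁, h₂⟩), rfl⟩]

theorem trekPoly_comp_sumElim_val {V₁ V₂ : Finset (Fin n)} (hV₁ : G.IsAncestral V₁)
    (hV₂ : G.IsAncestral V₂) (hdisj : Disjoint V₁ V₂) :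
    (fun p : SymIdx n => trekPoly G p.1.1 p.1.2) ∘
      Sum.elim (Sum.elim Subtype.val Subtype.val) (Subtype.val : CrossIdx n V₁ V₂ → SymIdx n) =
      Sum.elim (Sum.elim (fun p : SubIdx n V₁ => trekPoly (G.induce V₁) p.1.1.1 p.1.1.2)
        (fun p : SubIdx n V₂ => trekPoly (G.induce V₂) p.1.1.1 p.1.1.2)) 0 := by
  funext x
  rcases x with (p | p) | ⟨p, ⟨hi, hj⟩ | ⟨hi, hj⟩⟩ <;>
    simp only [Function.comp_apply, Sum.elim_inl, Sum.elim_inr, Pi.zero_apply]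
  · exact (trekPoly_induce hV₁ p.2.1 p.2.2).symm
  · exact (trekPoly_induce hV₂ p.2.1 p.2.2).symm
  · exact trekPoly_eq_zero_of_disjoint hV₁ hV₂ hdisj hi hj
  · exact trekPoly_eq_zero_of_disjoint hV₂ hV₁ hdisj.symm hi hj

end DAG

open DAG MvPolynomial in
/-- If `G` is the disjoint union of two subgraphs `G₁` (on `V₁`) and `G₂` (on `V₂`),
then `I_G = I_{G₁} + I_{G₂} + ⟨σ_{ij} : i ∈ V₁, j ∈ V₂⟩`. -/
theorem gaussianIdeal_disjoint_union {n : ℕ} (G : DAG n) (V₁ V₂ : Finset (Fin n))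
    (hdisj : Disjoint V₁ V₂) (hcover : V₁ ∪ V₂ = Finset.univ)
    (hedge : ∀ i j, G.edge i j = true → ((i ∈ V₁ ∧ j ∈ V₁) ∨ (i ∈ V₂ ∧ j ∈ V₂))) :
    gaussianIdeal G =
      Ideal.map (rename (Subtype.val : SubIdx n V₁ → SymIdx n) :
          MvPolynomial (SubIdx n V₁) ℂ →ₐ[ℂ] MvPolynomial (SymIdx n) ℂ)
        (hiddenIdeal (G.induce V₁) V₁) ⊔
      Ideal.map (rename (Subtype.val : SubIdx n V₂ → SymIdx n) :
          MvPolynomial (SubIdx n V₂) ℂ →ₐ[ℂ] MvPolynomial (SymIdx n) ℂ)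
        (hiddenIdeal (G.induce V₂) V₂) ⊔
      Ideal.span {f | ∃ p : SymIdx n,
        ((p.1.1 ∈ V₁ ∧ p.1.2 ∈ V₂) ∨ (p.1.1 ∈ V₂ ∧ p.1.2 ∈ V₁)) ∧ f = X p} := by
  have hV₁ : G.IsAncestral V₁ := isAncestral_of_forall_edge hdisj hedge
  have hV₂ : G.IsAncestral V₂ :=
    isAncestral_of_forall_edge hdisj.symm fun i j h => (hedge i j h).symm
  have hsupp (S : Finset (Fin n)) (p : SubIdx n S) :
      trekPoly (G.induce S) p.1.1.1 p.1.1.2 ∈ supported ℂ (varsOn S) :=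
    trekPoly_mem_supported (G.induce_isAncestral S) p.2.1 p.2.2
  rw [gaussianIdeal, phi, ker_aeval_eq_map_rename (surjective_sumElim_val hcover),
    trekPoly_comp_sumElim_val hV₁ hV₂ hdisj, ker_aeval_sumElim_zero,
    ker_aeval_sumElim_of_supported (disjoint_varsOn hdisj) (hsupp V₁) (hsupp V₂)]
  simp only [Ideal.map_sup, Ideal.map_mapₐ, rename_comp_rename]
  rw [← map_rename_val_idealOfVars]
  rfl
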